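/- Fix a positive integer d and v ∈ I(d). Let C be a v-chain and k a positive integer. If odepth_C(α) ≤ k for every element α of C, then the depth in 𝔖_C of every element of 𝔖_C is at most the smallest even integer not smaller than k. -/

import Mathlib

namespace OG

/-- `star d k = k* = 2d+1-k`. -/
def star (d k : ℕ) : ℕ := 2 * d + 1 - k

/-- `I(d,2d)`: the set of `d`-element subsets of `{1,…,2d}`. -/
def Idn (d : ℕ) : Set (Finset ℕ) :=
  {v | v.card = d ∧ ∀ k ∈ v, 1 ≤ k ∧ k ≤ 2 * d}

/-- The partial order on `I(d,2d)`: entrywise comparison of increasing enumerations. -/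
def leI (x y : Finset ℕ) : Prop :=
  List.Forall₂ (· ≤ ·) (x.sort (· ≤ ·)) (y.sort (· ≤ ·))

/-- `I(d)`: elements of `I(d,2d)` containing exactly one of `k`, `k*` for each `k`,
with evenly many entries exceeding `d`. -/
def Iset (d : ℕ) : Set (Finset ℕ) :=
  {v | v ∈ Idn d ∧ (∀ k, 1 ≤ k → k ≤ 2 * d → (k ∈ v ↔ star d k ∉ v)) ∧
       Even ((v.filter (fun k => d < k)).card)}

/-- membership in `N(v)`. -/
def inN (d : ℕ) (v : Finset ℕ) (p : ℕ × ℕ) : Prop :=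
  1 ≤ p.1 ∧ p.1 ≤ 2 * d ∧ 1 ≤ p.2 ∧ p.2 ≤ 2 * d ∧ p.1 ∉ v ∧ p.2 ∈ v ∧ p.2 < p.1

/-- membership in `OR(v)`. -/
def inOR (d : ℕ) (v : Finset ℕ) (p : ℕ × ℕ) : Prop :=
  1 ≤ p.1 ∧ p.1 ≤ 2 * d ∧ 1 ≤ p.2 ∧ p.2 ≤ 2 * d ∧ p.1 ∉ v ∧ p.2 ∈ v ∧ p.1 < star d p.2

/-- membership in `ON(v) = OR(v) ∩ N(v)`. -/
def inON (d : ℕ) (v : Finset ℕ) (p : ℕ × ℕ) : Prop := inN d v p ∧ inOR d v p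

/-- membership in the diagonal `D(v)`. -/
def inDiag (d : ℕ) (v : Finset ℕ) (p : ℕ × ℕ) : Prop :=
  p.1 ∉ v ∧ p.2 ∈ v ∧ p.1 = star d p.2

instance (d : ℕ) (v : Finset ℕ) : DecidablePred (inN d v) := fun p => by
  unfold inN; infer_instance

instance (d : ℕ) (v : Finset ℕ) : DecidablePred (inOR d v) := fun p => by
  unfold inOR; infer_instance

instance (d : ℕ) (v : Finset ℕ) : DecidablePred (inON d v) := fun p => by
  unfold inON; infer_instance

instance (d : ℕ) (v : Finset ℕ) : DecidablePred (inDiag d v) := fun p => by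
  unfold inDiag; infer_instance

/-- `(R,C) > (r,c)` iff `R > r` and `C < c`. -/
def pgt (A B : ℕ × ℕ) : Prop := B.1 < A.1 ∧ A.2 < B.2

instance : DecidableRel pgt := fun A B => by unfold pgt; infer_instance

/-- `(R,C)` dominates `(r,c)` iff `R ≥ r` and `C ≤ c`. -/
def pdom (A B : ℕ × ℕ) : Prop := B.1 ≤ A.1 ∧ A.2 ≤ B.2

/-- vertical projection `p_v(r,c) = (c*,c)`. -/
def pv (d : ℕ) (α : ℕ × ℕ) : ℕ × ℕ := (star d α.2, α.2)

/-- horizontal projection `p_h(r,c) = (r,r*)`. -/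
def ph (d : ℕ) (α : ℕ × ℕ) : ℕ × ℕ := (α.1, star d α.1)

/-- `(r,c)^# = (c*,r*)`. -/
def hash (d : ℕ) (α : ℕ × ℕ) : ℕ × ℕ := (star d α.2, star d α.1)

/-- A `v`-chain: a strictly decreasing (under `pgt`) list of elements of `ON(v)`. -/
def IsVChain (d : ℕ) (v : Finset ℕ) (C : List (ℕ × ℕ)) : Prop :=
  C.Chain' pgt ∧ ∀ α ∈ C, inON d v α

/-- Two consecutive elements `(r,c) > (R,C)` of a `v`-chain are connected
if `r* ≥ C` and `R > r*`. -/
def Connected (d : ℕ) (α β : ℕ × ℕ) : Prop :=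
  β.2 ≤ star d α.1 ∧ star d α.1 < β.1

instance (d : ℕ) : ∀ α β, Decidable (Connected d α β) := fun α β => by
  unfold Connected; infer_instance

/-- The connected components of a `v`-chain. -/
def components (d : ℕ) (C : List (ℕ × ℕ)) : List (List (ℕ × ℕ)) :=
  C.splitBy (fun a b => decide (Connected d a b))

/-- The three possible types of an element of a `v`-chain. -/
inductive VType | V | H | S
deriving DecidableEq

/-- The type of an element `α` of a `v`-chain `C`: type V if `α` is not the last element
of its connected component or that component has even cardinality; otherwise type H if
`p_h(α) ∈ N(v)` (i.e. `r > r*`) and type S if not. -/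
def typeOf (d : ℕ) (C : List (ℕ × ℕ)) (α : ℕ × ℕ) : VType :=
  match (components d C).find? (fun g => decide (α ∈ g)) with
  | some g =>
      if g.getLast? = some α ∧ Odd g.length then
        (if star d α.1 < α.1 then VType.H else VType.S)
      else VType.V
  | none => VType.V

/-- `𝔖_{C,α}`. -/
def SCa (d : ℕ) (C : List (ℕ × ℕ)) (α : ℕ × ℕ) : Multiset (ℕ × ℕ) :=
  match typeOf d C α with
  | VType.V => {pv d α}
  | VType.H => {pv d α, ph d α}
  | VType.S => {α, hash d α}

/-- `𝔖_C`: the multiset union of the `𝔖_{C,α}` over `α ∈ C`. -/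
def SC (d : ℕ) (C : List (ℕ × ℕ)) : Multiset (ℕ × ℕ) :=
  (C.map (fun α => SCa d C α)).sum

/-- `q_{C,α}`. -/
def qCa (d : ℕ) (C : List (ℕ × ℕ)) (α : ℕ × ℕ) : ℕ × ℕ :=
  match typeOf d C α with
  | VType.S => α
  | _ => pv d α

/-- A strictly decreasing chain of elements of the monomial `S`. -/
def IsChainIn (S : Multiset (ℕ × ℕ)) (L : List (ℕ × ℕ)) : Prop :=
  L.Chain' pgt ∧ ∀ β ∈ L, β ∈ S

/-- The depth of `α` in a monomial `S` of `N(v)`: the maximal length of a strictly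
decreasing chain of elements of `S` ending at `α`. -/
noncomputable def depth (S : Multiset (ℕ × ℕ)) (α : ℕ × ℕ) : ℕ :=
  sSup {k | ∃ L, IsChainIn S L ∧ L.getLast? = some α ∧ L.length = k}

/-- The o-depth of `α` in a `v`-chain `C`: the depth of `q_{C,α}` in `𝔖_C`. -/
noncomputable def odepthC (d : ℕ) (C : List (ℕ × ℕ)) (α : ℕ × ℕ) : ℕ :=
  depth (SC d C) (qCa d C α)

/-- The o-depth of `α` in a monomial `S` of `ON(v)`: the maximum of `odepthC` over
all `v`-chains in `S` containing `α`. -/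
noncomputable def odepthM (d : ℕ) (v : Finset ℕ) (S : Multiset (ℕ × ℕ)) (α : ℕ × ℕ) : ℕ :=
  sSup {k | ∃ C, IsVChain d v C ∧ (∀ β ∈ C, β ∈ S) ∧ α ∈ C ∧ odepthC d C α = k}

/-- A distinguished subset of `N(v)`. -/
def Distinguished (d : ℕ) (v : Finset ℕ) (S : Finset (ℕ × ℕ)) : Prop :=
  (∀ p ∈ S, inN d v p) ∧
  ∀ A ∈ S, ∀ B ∈ S, A ≠ B →
    A.1 ≠ B.1 ∧ A.2 ≠ B.2 ∧ (B.1 < A.1 → (B.1 < A.2 ∨ A.2 < B.2))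

/-- The element of `I(d,2d)` attached to a distinguished subset `S` of `N(v)`:
remove from `v` the column indices of elements of `S` and add their row indices. -/
def toW (v : Finset ℕ) (S : Finset (ℕ × ℕ)) : Finset ℕ :=
  (v \ S.image Prod.snd) ∪ S.image Prod.fst

/-- `w(C) = w_C`, the element of `I(d,2d)` attached to the `v`-chain `C` via the
distinguished subset `𝔖_C`. -/
def wC (d : ℕ) (v : Finset ℕ) (C : List (ℕ × ℕ)) : Finset ℕ :=
  toW v (SC d C).toFinset

/-- `w` ortho-dominates a monomial `S` in `ON(v)`: `w ≥ w(C)` for every `v`-chain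
`C` contained in `S`. -/
def ODominates (d : ℕ) (v w : Finset ℕ) (S : Multiset (ℕ × ℕ)) : Prop :=
  ∀ C : List (ℕ × ℕ), IsVChain d v C → (∀ β ∈ C, β ∈ S) → leI (wC d v C) w

/-- `x` dominates a monomial `S` in `N(v)` (in the sense of the Grassmannian case):
`x ≥ w_L` for every strictly decreasing chain `L` contained in `S`. -/
def Dominates (d : ℕ) (v x : Finset ℕ) (S : Multiset (ℕ × ℕ)) : Prop :=
  ∀ L : List (ℕ × ℕ), L.Chain' pgt → (∀ β ∈ L, β ∈ S) → leI (toW v L.toFinset) x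

/-- The `v`-degree of `θ`: half the cardinality of `v \ θ`. -/
def vdeg (v θ : Finset ℕ) : ℕ := (v \ θ).card / 2

/-- the element next to `α` in the list `C`. -/
def nextInC (C : List (ℕ × ℕ)) (α : ℕ × ℕ) : Option (ℕ × ℕ) :=
  C[C.idxOf α + 1]?

/-- The critical element of a `v`-chain: its first element whose horizontal projection
does not belong to `N(v)` (i.e. with `r ≤ r*`). -/
def critical (d : ℕ) (C : List (ℕ × ℕ)) : Option (ℕ × ℕ) :=
  C.find? (fun x => decide (x.1 ≤ star d x.1))

/-- `α` is the last element of its connected component in `C`. -/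
def isCompLast (d : ℕ) (C : List (ℕ × ℕ)) (α : ℕ × ℕ) : Prop :=
  ∃ g ∈ components d C, g.getLast? = some α

/-- The condition (*): `α` has type H in `C` and `p_h(α) ≯ β'` for some `β' ∈ 𝔖_{C,β}`. -/
def starCond (d : ℕ) (C : List (ℕ × ℕ)) (α β : ℕ × ℕ) : Prop :=
  typeOf d C α = VType.H ∧ ∃ β' ∈ SCa d C β, ¬ pgt (ph d α) β'

/-- A standard monomial in `I(d)`: a weakly decreasing sequence of elements of `I(d)`. -/
def IsStdMon (d : ℕ) (L : List (Finset ℕ)) : Prop :=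
  (∀ θ ∈ L, θ ∈ Iset d) ∧ L.Chain' (fun a b => leI b a)

/-- A standard monomial is `w`-dominated if `w ≥ θ₁`. -/
def WDominated (w : Finset ℕ) (L : List (Finset ℕ)) : Prop :=
  ∀ θ, L.head? = some θ → leI θ w

/-- A standard monomial is `v`-compatible if each member is comparable with `v`
and distinct from `v`. -/
def VCompatible (v : Finset ℕ) (L : List (Finset ℕ)) : Prop :=
  ∀ θ ∈ L, θ ≠ v ∧ (leI θ v ∨ leI v θ)

/-- The degree of a standard monomial: the sum of the `v`-degrees of its members. -/
def stdDeg (v : Finset ℕ) (L : List (Finset ℕ)) : ℕ :=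
  (L.map (fun θ => vdeg v θ)).sum

end OG

/-!
Let a chain of `𝔖_C` end at `y ∈ 𝔖_{C,β}`. If `y = q_{C,β}`, its length is at most the o-depth
of `β`, hence at most `k`. If `y = β^#` (type S), every element above `γ^#` is either above `γ` or
of the form `δ^#` with `δ > γ`, so the chain can be rerouted to end at `β` with the same length.
If `y = p_h(β)` (type H), every earlier element of the chain lies on the chain `W` formed by the
antidiagonal elements `p_v(γ)`, `p_h(γ)` of `𝔖_C` contributed by the `γ > β` of `C`, followed by
`p_v(β)`. Each connected component contributes an even number of antidiagonal elements, so `|W|`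
is odd; since `|W| ≤ odepth_C(β) ≤ k`, the chain has length at most `|W| + 1`, which is at most the
least even number `≥ k`. That `W` is decreasing rests on one observation: if `γ = (r, c)` has
type H, every later element of `C` with column at most `r*` has type S, because all rows after the
component of `γ` are then at most `d`, which forces singleton components.
-/

namespace OG

open List

instance : IsStrictOrder (ℕ × ℕ) pgt where
  irrefl _ h := lt_irrefl _ h.1
  trans _ _ _ hab hbc := ⟨hbc.1.trans hab.1, hab.2.trans hbc.2⟩

lemma isChainIn_append_singleton {S : Multiset (ℕ × ℕ)} {L : List (ℕ × ℕ)} {y : ℕ × ℕ} :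
    IsChainIn S (L ++ [y]) ↔ IsChainIn S L ∧ (∀ z ∈ L.getLast?, pgt z y) ∧ y ∈ S := by
  show (IsChain pgt (L ++ [y]) ∧ _) ↔ (IsChain pgt L ∧ _) ∧ _
  rw [isChain_append, forall_mem_append, forall_mem_singleton]
  simp only [isChain_singleton, head?_singleton, Option.mem_some_iff, forall_eq', true_and]
  tauto

lemma IsChainIn.length_le_card {S : Multiset (ℕ × ℕ)} {L : List (ℕ × ℕ)} (hL : IsChainIn S L) :
    L.length ≤ Multiset.card S := by
  have hnd : L.Nodup := (isChain_iff_pairwise.mp hL.1).imp ne_of_irrefl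
  calc L.length ≤ S.toList.length :=
        (subperm_of_subset hnd fun x hx => Multiset.mem_toList.mpr (hL.2 x hx)).length_le
    _ = Multiset.card S := Multiset.length_toList S

lemma length_le_depth {S : Multiset (ℕ × ℕ)} {L : List (ℕ × ℕ)} {a : ℕ × ℕ} (hL : IsChainIn S L)
    (ha : L.getLast? = some a) : L.length ≤ depth S a :=
  le_csSup ⟨Multiset.card S, by rintro _ ⟨L, hL, -, rfl⟩; exact hL.length_le_card⟩ ⟨L, hL, ha, rfl⟩

variable {d : ℕ} {v : Finset ℕ} {C : List (ℕ × ℕ)}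

lemma IsVChain.pairwise (hC : IsVChain d v C) : C.Pairwise pgt :=
  isChain_iff_pairwise.mp hC.1

lemma IsVChain.nodup (hC : IsVChain d v C) : C.Nodup :=
  hC.pairwise.imp ne_of_irrefl

lemma IsVChain.bounds (hC : IsVChain d v C) {α : ℕ × ℕ} (hα : α ∈ C) :
    1 ≤ α.2 ∧ α.2 < α.1 ∧ α.1 + α.2 ≤ 2 * d := by
  obtain ⟨⟨-, -, h₁, -, -, -, h₂⟩, ⟨-, -, -, -, -, -, h₃⟩⟩ := hC.2 α hα
  unfold star at h₃
  omega

lemma IsVChain.pgt_of_snd_lt (hC : IsVChain d v C) {a b : ℕ × ℕ} (ha : a ∈ C) (hb : b ∈ C)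
    (h : a.2 < b.2) : pgt a b := by
  have : Std.Symm fun x y : ℕ × ℕ => pgt x y ∨ pgt y x := ⟨fun _ _ h => h.symm⟩
  rcases (hC.pairwise.imp (R := pgt) (S := fun x y => pgt x y ∨ pgt y x) Or.inl).forall ha hb
    (by rintro rfl; omega) with h' | h'
  · exact h'
  · exact absurd h'.2 (by omega)

section Components

variable {g : List (ℕ × ℕ)} {u : ℕ × ℕ}

lemma flatten_components (d : ℕ) (C : List (ℕ × ℕ)) : (components d C).flatten = C :=
  flatten_splitBy _ _

lemma exists_mem_components (hu : u ∈ C) : ∃ g ∈ components d C, u ∈ g := by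
  rw [← flatten_components d C] at hu
  exact mem_flatten.mp hu

lemma find?_mem_eq_some_of_nodup {α : Type*} [BEq α] [LawfulBEq α] {gs : List (List α)} {g : List α}
    {u : α} (hgs : gs.flatten.Nodup) (hg : g ∈ gs) (hu : u ∈ g) :
    gs.find? (fun h => decide (u ∈ h)) = some g := by
  induction gs with
  | nil => cases hg
  | cons g' gs ih =>
    rw [flatten_cons, nodup_append] at hgs
    rcases mem_cons.mp hg with rfl | hg
    · exact find?_cons_of_pos (by simpa using hu)
    · have hu' : u ∉ g' := fun hu' => hgs.2.2 u hu' u (mem_flatten.mpr ⟨g, hg, hu⟩) rfl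
      rw [find?_cons_of_neg (by simpa using hu')]
      exact ih hgs.2.1 hg

lemma typeOf_eq (hC : C.Nodup) (hg : g ∈ components d C) (hu : u ∈ g) :
    typeOf d C u = if g.getLast? = some u ∧ Odd g.length then
      (if star d u.1 < u.1 then VType.H else VType.S) else VType.V := by
  rw [← flatten_components d C] at hC
  rw [typeOf, find?_mem_eq_some_of_nodup hC hg hu]

lemma exists_of_typeOf_ne_V (h : typeOf d C u ≠ VType.V) :
    ∃ g ∈ components d C, g.getLast? = some u ∧
      typeOf d C u = if star d u.1 < u.1 then VType.H else VType.S := by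
  unfold typeOf at h ⊢
  split at h
  next g hf =>
    by_cases hlast : g.getLast? = some u ∧ Odd g.length
    · exact ⟨g, mem_of_find?_eq_some hf, hlast.1, if_pos hlast⟩
    · exact absurd (if_neg hlast) h
  next => exact absurd rfl h

lemma lt_fst_of_typeOf_eq_H (h : typeOf d C u = VType.H) : d < u.1 := by
  obtain ⟨-, -, -, h'⟩ := exists_of_typeOf_ne_V (h ▸ nofun : typeOf d C u ≠ VType.V)
  rw [h] at h'
  split_ifs at h' with hu
  unfold star at hu
  omega

lemma fst_le_of_typeOf_eq_S (h : typeOf d C u = VType.S) : u.1 ≤ d := by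
  obtain ⟨-, -, -, h'⟩ := exists_of_typeOf_ne_V (h ▸ nofun : typeOf d C u ≠ VType.V)
  rw [h] at h'
  split_ifs at h' with hu
  unfold star at hu
  omega

lemma exists_eq_append_of_getLast (hg : g ∈ components d C) (hu : g.getLast? = some u) :
    ∃ A B, C = A ++ u :: B ∧ ∀ x ∈ B.head?, ¬ Connected d u x := by
  obtain ⟨P, Q, hPQ⟩ := append_of_mem hg
  obtain ⟨init, rfl⟩ := getLast?_eq_some_iff.mp hu
  refine ⟨P.flatten ++ init, Q.flatten, ?_, ?_⟩
  · rw [← flatten_components d C, hPQ]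
    simp
  · cases Q with
    | nil => simp
    | cons h Q =>
      intro x hx
      have hsplit := isChain_getLast_head_splitBy (fun a b => decide (Connected d a b)) C
      rw [show C.splitBy _ = components d C from rfl, hPQ] at hsplit
      have hpair : IsChain _ [init ++ [u], h] := hsplit.infix ⟨P, Q, by simp⟩
      obtain ⟨_, hh, hnc⟩ := isChain_pair.mp hpair
      have hx' : h.head hh = x := by
        cases h with
        | nil => exact absurd rfl hh
        | cons a h => simpa using hx
      simpa [hx'] using hnc

lemma components_append_cons {A B : List (ℕ × ℕ)} (h : ∀ x ∈ B.head?, ¬ Connected d u x) :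
    components d (A ++ u :: B) = components d (A ++ [u]) ++ components d B := by
  rw [← singleton_append, ← append_assoc]
  exact splitBy_append (by simpa using h)

lemma not_connected_of_fst_le {a b : ℕ × ℕ} (ha : a.1 ≤ d) (hb : b.1 ≤ d) : ¬ Connected d a b := by
  unfold Connected star
  omega

lemma eq_singleton_of_mem_components (hrow : ∀ y ∈ C, y.1 ≤ d) (hg : g ∈ components d C)
    (hu : u ∈ g) : g = [u] := by
  have hsub : ∀ y ∈ g, y ∈ C := fun y hy => flatten_components d C ▸ mem_flatten_of_mem hg hy
  have hchain : g.IsChain (Connected d) := (isChain_of_mem_splitBy hg).imp (by simp)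
  match g, hu, hchain with
  | [a], hu, _ => rw [mem_singleton.mp hu]
  | a :: b :: _, _, hchain =>
    exact absurd (isChain_cons_cons.mp hchain).1
      (not_connected_of_fst_le (hrow a (hsub a (by simp))) (hrow b (hsub b (by simp))))

end Components

lemma pgt_iff_mem_of_eq_append (hC : C.Pairwise pgt) {A B : List (ℕ × ℕ)} {β γ : ℕ × ℕ}
    (hAB : C = A ++ β :: B) (hγ : γ ∈ C) : pgt β γ ↔ γ ∈ B := by
  rw [hAB, pairwise_append, pairwise_cons] at hC
  rw [hAB, mem_append, mem_cons] at hγ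
  refine ⟨fun hβγ => ?_, hC.2.1.1 γ⟩
  rcases hγ with hγA | rfl | hγB
  · exact absurd (hC.2.2 γ hγA β mem_cons_self) (asymm hβγ)
  · exact absurd hβγ (irrefl _)
  · exact hγB

lemma typeOf_eq_S_of_pgt (hC : IsVChain d v C) {β γ : ℕ × ℕ} (hβ : typeOf d C β = VType.H)
    (hγ : γ ∈ C) (hβγ : pgt β γ) (hcol : γ.2 ≤ star d β.1) : typeOf d C γ = VType.S := by
  obtain ⟨g, hg, hlast, -⟩ := exists_of_typeOf_ne_V (hβ ▸ nofun : typeOf d C β ≠ VType.V)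
  have hdβ := lt_fst_of_typeOf_eq_H hβ
  obtain ⟨A, B, hAB, hnc⟩ := exists_eq_append_of_getLast hg hlast
  have hγB := (pgt_iff_mem_of_eq_append hC.pairwise hAB hγ).mp hβγ
  obtain ⟨x, B, rfl⟩ : ∃ x B', B = x :: B' := by
    cases B with
    | nil => cases hγB
    | cons x B' => exact ⟨x, B', rfl⟩
  have hxB := pairwise_cons.mp (hC.pairwise.sublist (hAB ▸ by simp) : (x :: B).Pairwise pgt)
  have hxγ : x.2 ≤ γ.2 := by
    rcases mem_cons.mp hγB with rfl | h
    · rfl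
    · exact (hxB.1 γ h).2.le
  have hrow : ∀ y ∈ x :: B, y.1 ≤ d := by
    have hx := hnc x rfl
    unfold Connected at hx
    unfold star at hx hcol
    intro y hy
    rcases mem_cons.mp hy with rfl | hy
    · omega
    · have := (hxB.1 y hy).1
      omega
  obtain ⟨h, hh, hγh⟩ := exists_mem_components hγB
  have hγC : [γ] ∈ components d C := by
    rw [hAB, components_append_cons hnc, ← eq_singleton_of_mem_components hrow hh hγh]
    exact mem_append_right _ hh
  have hγd := hrow γ hγB
  rw [typeOf_eq hC.nodup hγC (mem_singleton_self γ)]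
  unfold star
  simp only [getLast?_singleton, length_singleton, odd_one, and_self, if_true]
  rw [if_neg (by omega)]

lemma mem_SC {y : ℕ × ℕ} : y ∈ SC d C ↔ ∃ β ∈ C, y ∈ SCa d C β := by
  unfold SC
  generalize SCa d C = f
  induction C with
  | nil => simp
  | cons β C ih => simp [ih]

lemma mem_SCa_of_typeOf_eq_S {β x : ℕ × ℕ} (h : typeOf d C β = VType.S) :
    x ∈ SCa d C β ↔ x = β ∨ x = hash d β := by
  rw [SCa, h]
  simp

lemma qCa_of_typeOf_eq_S {β : ℕ × ℕ} (h : typeOf d C β = VType.S) : qCa d C β = β := by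
  rw [qCa, h]

lemma qCa_of_typeOf_ne_S {β : ℕ × ℕ} (h : typeOf d C β ≠ VType.S) : qCa d C β = pv d β := by
  unfold qCa
  split <;> simp_all

/-- The antidiagonal elements of `𝔖_{C,β}`, in decreasing order. -/
def diagPart (d : ℕ) (C : List (ℕ × ℕ)) (β : ℕ × ℕ) : List (ℕ × ℕ) :=
  match typeOf d C β with
  | VType.V => [pv d β]
  | VType.H => [pv d β, ph d β]
  | VType.S => []

lemma mem_diagPart {β x : ℕ × ℕ} : x ∈ diagPart d C β ↔
    typeOf d C β ≠ VType.S ∧ x = pv d β ∨ typeOf d C β = VType.H ∧ x = ph d β := by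
  unfold diagPart
  split <;> simp_all

lemma mem_SCa_iff_mem_diagPart {β x : ℕ × ℕ} (h : typeOf d C β ≠ VType.S) :
    x ∈ SCa d C β ↔ x ∈ diagPart d C β := by
  unfold SCa diagPart
  split <;> simp_all

lemma typeOf_ne_S_of_mem_diagPart {β x : ℕ × ℕ} (hx : x ∈ diagPart d C β) :
    typeOf d C β ≠ VType.S := by
  rcases mem_diagPart.mp hx with h | h
  · exact h.1
  · exact h.1 ▸ nofun

lemma mem_SC_of_mem_diagPart {β x : ℕ × ℕ} (hβ : β ∈ C) (hx : x ∈ diagPart d C β) :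
    x ∈ SC d C :=
  mem_SC.mpr ⟨β, hβ, (mem_SCa_iff_mem_diagPart (typeOf_ne_S_of_mem_diagPart hx)).mpr hx⟩

lemma pairwise_diagPart (hC : IsVChain d v C) {β : ℕ × ℕ} (hβ : β ∈ C) :
    (diagPart d C β).Pairwise pgt := by
  obtain ⟨-, h₁, h₂⟩ := hC.bounds hβ
  unfold diagPart
  split <;> simp [pgt, pv, ph, star]; omega

lemma pgt_of_mem_diagPart (hC : IsVChain d v C) {β γ x y : ℕ × ℕ} (hβ : β ∈ C) (hγ : γ ∈ C)
    (hβγ : pgt β γ) (hx : x ∈ diagPart d C β) (hy : y ∈ diagPart d C γ) : pgt x y := by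
  have hrow : typeOf d C β = VType.H → star d β.1 < γ.2 := fun hH => by
    by_contra hcol
    exact typeOf_ne_S_of_mem_diagPart hy (typeOf_eq_S_of_pgt hC hH hγ hβγ (by omega))
  obtain ⟨-, hβ₁, hβ₂⟩ := hC.bounds hβ
  obtain ⟨-, hγ₁, hγ₂⟩ := hC.bounds hγ
  obtain ⟨h₁, h₂⟩ := hβγ
  rcases mem_diagPart.mp hx with ⟨-, rfl⟩ | ⟨hH, rfl⟩ <;>
    rcases mem_diagPart.mp hy with ⟨-, rfl⟩ | ⟨-, rfl⟩
  all_goals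
    try have := hrow hH
    simp only [pgt, pv, ph, star] at *
    omega

lemma pairwise_flatMap_diagPart (hC : IsVChain d v C) {A : List (ℕ × ℕ)} (hA : A.Sublist C) :
    (A.flatMap (diagPart d C)).Pairwise pgt := by
  refine pairwise_flatMap.mpr ⟨fun β hβ => pairwise_diagPart hC (hA.subset hβ), ?_⟩
  exact (hC.pairwise.sublist hA).imp_of_mem fun hβ hγ hβγ _ hx _ hy =>
    pgt_of_mem_diagPart hC (hA.subset hβ) (hA.subset hγ) hβγ hx hy

lemma even_length_flatMap_diagPart_of_mem_components (hC : C.Nodup) {g : List (ℕ × ℕ)}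
    (hg : g ∈ components d C) : Even (g.flatMap (diagPart d C)).length := by
  obtain ⟨init, e, rfl⟩ : ∃ init e, g = init ++ [e] := by
    rcases eq_nil_or_concat g with rfl | ⟨init, e, rfl⟩
    · exact absurd hg (nil_notMem_splitBy _ _)
    · exact ⟨init, e, concat_eq_append ..⟩
  have hinit : init.flatMap (diagPart d C) = init.map (pv d) := by
    have he : e ∉ init := by
      have hnd : (init ++ [e]).Nodup :=
        (nodup_flatten.mp ((flatten_components d C).symm ▸ hC)).1 _ hg
      exact fun he => (nodup_append.mp hnd).2.2 e he e (mem_singleton_self e) rfl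
    rw [map_eq_flatMap]
    refine flatMap_congr fun u hu => ?_
    have hV : typeOf d C u = VType.V := by
      rw [typeOf_eq hC hg (by simp [hu]), if_neg]
      rintro ⟨h, -⟩
      simp only [getLast?_concat, Option.some_inj] at h
      exact he (h ▸ hu)
    rw [diagPart, hV]
  rw [flatMap_append, length_append, hinit, length_map, flatMap_singleton]
  have he := typeOf_eq hC hg (mem_append_right init (mem_singleton_self e))
  rw [getLast?_concat, length_append, length_singleton] at he
  rw [diagPart, he]
  by_cases hodd : Odd (init.length + 1)
  · rw [if_pos ⟨rfl, hodd⟩]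
    rw [Nat.odd_add_one, Nat.not_odd_iff_even] at hodd
    split_ifs <;> simpa [Nat.even_add] using hodd
  · rw [if_neg (by tauto)]
    simpa [Nat.even_add_one] using hodd

lemma even_length_flatMap_diagPart (hC : C.Nodup) {A : List (ℕ × ℕ)}
    (hA : ∀ g ∈ components d A, g ∈ components d C) : Even (A.flatMap (diagPart d C)).length := by
  rw [← flatten_components d A]
  generalize components d A = gs at hA
  induction gs with
  | nil => simp
  | cons g gs ih =>
    rw [flatten_cons, flatMap_append, length_append]
    exact (even_length_flatMap_diagPart_of_mem_components hC (hA g mem_cons_self)).add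
      (ih fun g hg => hA g (mem_cons_of_mem _ hg))

lemma mem_diagonal_chain_of_pgt_ph (hC : IsVChain d v C) {A B : List (ℕ × ℕ)} {j x : ℕ × ℕ}
    (hAB : C = A ++ j :: B) (hj : typeOf d C j = VType.H) (hx : x ∈ SC d C)
    (hxj : pgt x (ph d j)) : x ∈ A.flatMap (diagPart d C) ++ [pv d j] := by
  have hjC : j ∈ C := hAB ▸ by simp
  obtain ⟨β, hβC, hxβ⟩ := mem_SC.mp hx
  have hS : typeOf d C β ≠ VType.S := by
    intro hS
    have := fst_le_of_typeOf_eq_S hS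
    have := lt_fst_of_typeOf_eq_H hj
    obtain ⟨-, -, hβ₂⟩ := hC.bounds hβC
    obtain ⟨-, -, hj₂⟩ := hC.bounds hjC
    rw [mem_SCa_of_typeOf_eq_S hS] at hxβ
    rcases hxβ with rfl | rfl <;> simp only [pgt, ph, hash, star] at hxj <;> omega
  rw [mem_SCa_iff_mem_diagPart hS] at hxβ
  have hβ := hβC
  rw [hAB, mem_append, mem_cons] at hβ
  rcases hβ with hβ | rfl | hβ
  · exact mem_append_left _ (mem_flatMap.mpr ⟨β, hβ, hxβ⟩)
  · rw [diagPart, hj, mem_pair] at hxβ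
    rcases hxβ with rfl | rfl
    · exact mem_append_right _ (mem_singleton_self _)
    · exact absurd hxj (irrefl _)
  · have hjβ := (pgt_iff_mem_of_eq_append hC.pairwise hAB hβC).mpr hβ
    have hph : ph d j ∈ diagPart d C j := mem_diagPart.mpr (Or.inr ⟨hj, rfl⟩)
    exact absurd hxj (asymm (pgt_of_mem_diagPart hC hjC hβC hjβ hph hxβ))

lemma exists_diagonal_chain (hC : IsVChain d v C) {j : ℕ × ℕ} (hj : typeOf d C j = VType.H) :
    ∃ W, IsChainIn (SC d C) W ∧ W.getLast? = some (pv d j) ∧ Odd W.length ∧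
      ∀ M, IsChainIn (SC d C) (M ++ [ph d j]) → M.length ≤ W.length := by
  obtain ⟨g, hg, hlast, -⟩ := exists_of_typeOf_ne_V (hj ▸ nofun : typeOf d C j ≠ VType.V)
  obtain ⟨A, B, hAB, hnc⟩ := exists_eq_append_of_getLast hg hlast
  have hsub : (A ++ [j]).Sublist C := hAB ▸ by simp
  have hdiag : diagPart d C j = [pv d j, ph d j] := by rw [diagPart, hj]
  have hW : (A.flatMap (diagPart d C) ++ [pv d j]).Sublist ((A ++ [j]).flatMap (diagPart d C)) := by
    simp [flatMap_append, hdiag]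
  refine ⟨A.flatMap (diagPart d C) ++ [pv d j], ⟨?_, ?_⟩, getLast?_concat .., ?_, ?_⟩
  · exact ((pairwise_flatMap_diagPart hC hsub).sublist hW).isChain
  · intro x hx
    obtain ⟨β, hβ, hxβ⟩ := mem_flatMap.mp (hW.subset hx)
    exact mem_SC_of_mem_diagPart (hsub.subset hβ) hxβ
  · have heven := even_length_flatMap_diagPart hC.nodup (A := A ++ [j]) fun g hg => by
      rw [hAB, components_append_cons hnc]
      exact mem_append_left _ hg
    rw [flatMap_append, length_append, flatMap_singleton, hdiag] at heven
    rw [length_append, length_singleton]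
    simpa [Nat.even_add, parity_simps] using heven
  · intro M hM
    have hpw := pairwise_append.mp (isChain_iff_pairwise.mp hM.1)
    refine (subperm_of_subset (hpw.1.imp ne_of_irrefl) fun x hx => ?_).length_le
    exact mem_diagonal_chain_of_pgt_ph hC hAB hj (hM.2 x (mem_append_left _ hx))
      (hpw.2.2 x hx _ (mem_singleton_self _))

lemma pgt_or_eq_hash_of_pgt_hash (hC : IsVChain d v C) {β z : ℕ × ℕ}
    (hβ : typeOf d C β = VType.S) (hβC : β ∈ C) (hz : z ∈ SC d C) (hzβ : pgt z (hash d β)) :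
    pgt z β ∨ ∃ w ∈ C, typeOf d C w = VType.S ∧ z = hash d w ∧ pgt w β := by
  obtain ⟨w, hwC, hzw⟩ := mem_SC.mp hz
  have := fst_le_of_typeOf_eq_S hβ
  obtain ⟨-, hβ₁, hβ₂⟩ := hC.bounds hβC
  obtain ⟨-, hw₁, hw₂⟩ := hC.bounds hwC
  by_cases hwS : typeOf d C w = VType.S
  · have := fst_le_of_typeOf_eq_S hwS
    rw [mem_SCa_of_typeOf_eq_S hwS] at hzw
    rcases hzw with rfl | rfl <;> simp only [pgt, hash, star] at hzβ
    · omega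
    · exact Or.inr ⟨w, hwC, hwS, rfl, hC.pgt_of_snd_lt hwC hβC (by omega)⟩
  · left
    rcases mem_diagPart.mp ((mem_SCa_iff_mem_diagPart hwS).mp hzw) with ⟨-, rfl⟩ | ⟨-, rfl⟩ <;>
      simp only [pgt, pv, ph, hash, star] at hzβ ⊢ <;> omega

lemma exists_isChainIn_of_hash (hC : IsVChain d v C) {β : ℕ × ℕ} (hβ : typeOf d C β = VType.S)
    (hβC : β ∈ C) (M : List (ℕ × ℕ)) (hM : IsChainIn (SC d C) (M ++ [hash d β])) :
    ∃ M', IsChainIn (SC d C) (M' ++ [β]) ∧ M'.length = M.length := by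
  have hβS : β ∈ SC d C := mem_SC.mpr ⟨β, hβC, (mem_SCa_of_typeOf_eq_S hβ).mpr (Or.inl rfl)⟩
  induction M using List.reverseRecOn generalizing β with
  | nil => exact ⟨[], isChainIn_append_singleton.mpr ⟨⟨isChain_nil, nofun⟩, nofun, hβS⟩, rfl⟩
  | append_singleton M z ih =>
    obtain ⟨hMz, hzβ, -⟩ := isChainIn_append_singleton.mp hM
    have hz := (isChainIn_append_singleton.mp hMz).2.2
    rcases pgt_or_eq_hash_of_pgt_hash hC hβ hβC hz (hzβ z getLast?_concat) with
      h | ⟨w, hwC, hwS, rfl, hwβ⟩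
    · exact ⟨M ++ [z], isChainIn_append_singleton.mpr ⟨hMz, by simpa using h, hβS⟩, rfl⟩
    · obtain ⟨M', hM', hlen⟩ :=
        ih hwS hwC hMz (mem_SC.mpr ⟨w, hwC, (mem_SCa_of_typeOf_eq_S hwS).mpr (Or.inl rfl)⟩)
      exact ⟨M' ++ [w], isChainIn_append_singleton.mpr ⟨hM', by simpa using hwβ, hβS⟩,
        by simp [hlen]⟩

lemma length_le_of_isChainIn (hC : IsVChain d v C) {k : ℕ} (hk : ∀ α ∈ C, odepthC d C α ≤ k)
    {M : List (ℕ × ℕ)} {y : ℕ × ℕ} (hL : IsChainIn (SC d C) (M ++ [y])) :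
    (M ++ [y]).length ≤ if Even k then k else k + 1 := by
  have hq : ∀ β ∈ C, ∀ L, IsChainIn (SC d C) L → L.getLast? = some (qCa d C β) → L.length ≤ k :=
    fun β hβ L hL hlast => (length_le_depth hL hlast).trans (hk β hβ)
  have hk' : k ≤ if Even k then k else k + 1 := by split_ifs <;> omega
  obtain ⟨β, hβC, hyβ⟩ := mem_SC.mp (isChainIn_append_singleton.mp hL).2.2
  by_cases hS : typeOf d C β = VType.S
  · rw [mem_SCa_of_typeOf_eq_S hS] at hyβ
    rcases hyβ with rfl | rfl
    · exact (hq y hβC _ hL (by rw [getLast?_concat, qCa_of_typeOf_eq_S hS])).trans hk'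
    · obtain ⟨M', hM', hlen⟩ := exists_isChainIn_of_hash hC hS hβC M hL
      have := hq β hβC _ hM' (by rw [getLast?_concat, qCa_of_typeOf_eq_S hS])
      simp only [length_append, length_singleton, hlen] at this ⊢
      omega
  rcases mem_diagPart.mp ((mem_SCa_iff_mem_diagPart hS).mp hyβ) with ⟨-, rfl⟩ | ⟨hH, rfl⟩
  · exact (hq β hβC _ hL (by rw [getLast?_concat, qCa_of_typeOf_ne_S hS])).trans hk'
  obtain ⟨W, hW, hWlast, ⟨m, hm⟩, hMW⟩ := exists_diagonal_chain hC hH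
  have hWk : W.length ≤ k := hq β hβC W hW (by rwa [qCa_of_typeOf_ne_S hS])
  have := hMW M hL
  rw [length_append, length_singleton]
  split_ifs with heven
  · obtain ⟨n, hn⟩ := heven
    omega
  · omega

end OG

open OG in
theorem stmt12_general (d : ℕ) (v : Finset ℕ)
    (C : List (ℕ × ℕ)) (hC : IsVChain d v C) (k : ℕ)
    (hk : ∀ α ∈ C, odepthC d C α ≤ k) :
    ∀ β ∈ SC d C, depth (SC d C) β ≤ (if Even k then k else k + 1) := by
  intro β _
  refine csSup_le' ?_
  rintro _ ⟨L, hL, hlast, rfl⟩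
  obtain ⟨M, rfl⟩ := List.getLast?_eq_some_iff.mp hlast
  exact length_le_of_isChainIn hC hk hL

open OG in
/-- if the o-depths of elements of a `v`-chain `C` are bounded by `k`,
then the depths of elements of `𝔖_C` are bounded by the smallest even integer `≥ k`. -/
theorem stmt12 (d : ℕ) (hd : 0 < d) (v : Finset ℕ) (hv : v ∈ Iset d)
    (C : List (ℕ × ℕ)) (hC : IsVChain d v C) (k : ℕ)
    (hk : ∀ α ∈ C, odepthC d C α ≤ k) :
    ∀ β ∈ SC d C, depth (SC d C) β ≤ (if Even k then k else k + 1) :=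
  stmt12_general d v C hC k hk
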